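/- Let N be a norm on ℝ². Suppose there exist nonzero vectors x¹, x² ∈ ℝ² and nondegenerate segments I₁, I₂ contained in the boundary of the unit N-ball such that I₁ is parallel to x¹, I₂ is parallel to x², the line { t·x¹ : t ∈ ℝ } through the origin in direction x¹ intersects I₂, and the line { t·x² : t ∈ ℝ } through the origin in direction x² intersects I₁. Then there exists q₀ > 0 such that for all 0 < q < q₀ and for every two-colouring of the plane (every function c : ℝ² → Fin 2) there exists a monochromatic N-isometric copy of the geometric progression G(q). -/

import Mathlib

/-- `N` is a norm on the plane. -/
def IsNorm2 (N : (Fin 2 → ℝ) → ℝ) : Prop :=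
  (∀ x, N x = 0 ↔ x = 0) ∧ (∀ (a : ℝ) (x), N (a • x) = |a| * N x) ∧
  (∀ x y, N (x + y) ≤ N x + N y)

/-- The geometric progression G(q) = {0, 1, 1+q, 1+q+q², …} ⊆ ℝ. -/
def geomProg (q : ℝ) : Set ℝ :=
  {x | x = 0 ∨ ∃ i : ℕ, 1 ≤ i ∧ x = (1 - q ^ i) / (1 - q)}

/-- `M'` is an `N`-isometric copy (in the plane) of the set of reals `M`:
there is a bijection from `M` onto `M'` carrying absolute differences to `N`-distances. -/
def IsometricCopyOfReals (N : (Fin 2 → ℝ) → ℝ) (M : Set ℝ) (M' : Set (Fin 2 → ℝ)) : Prop :=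
  ∃ f : ℝ → (Fin 2 → ℝ), Set.BijOn f M M' ∧ ∀ x ∈ M, ∀ y ∈ M, N (f x - f y) = |x - y|


/-!
The hypotheses give `u`, `v` and a sign `σ` with `N (a • u + b • v) = a` and
`N (a • v + b • σ • u) = a` whenever `0 ≤ b ≤ ε a`. In the coordinates `(x, y) ↦ x • u + y • v`,
a sequence of points whose `i`-th step moves `q ^ i` horizontally and between `0` and `ε q ^ i`
vertically (an H-chain), or the same with the two axes exchanged through `twist σ`, is an
`N`-isometric copy of `G(q)`. So it suffices that every two-colouring of `ℝ × ℝ` has a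
monochromatic H-chain for `χ` or for `χ ∘ twist σ`.

If neither exists, then by induction on `j` no vertical or horizontal segment of length `ε q ^ j`
is monochromatic. By the induction hypothesis a chain can be continued backwards from any point,
down to index `0`, without changing colour, so a monochromatic `w × h` rectangle forces a rectangle of the other colour of size
`(w - τ) × (h + ε q ^ j)`, where `τ = q ^ (j + 1) / (1 - q)` bounds the tail of the chain, and
symmetrically one of size `(w + ε q ^ j) × (h - τ)`. As `τ < ε q ^ j` once `q < ε / (1 + ε)`,
alternating the two moves grows a monochromatic segment of length `ε q ^ j` into one of length
`1 / (1 - q)`, which carries a monochromatic chain. Finally, with no short vertical segment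
monochromatic, a greedy chain from the origin keeps its colour, a contradiction.
-/

open Set

section Sector

variable {E : Type*} [AddCommGroup E] [Module ℝ E] {N : E → ℝ} {ε ε' σ : ℝ} {u v : E}

/-- The unit sphere of `N` contains the segment `[u, u + ε • v]`, in homogeneous form. -/
def FlatSector (N : E → ℝ) (ε : ℝ) (u v : E) : Prop :=
  ∀ a, 0 ≤ a → ∀ b ∈ Icc 0 (ε * a), N (a • u + b • v) = a

lemma FlatSector.mono (hF : FlatSector N ε u v) (h : ε' ≤ ε) : FlatSector N ε' u v :=
  fun a ha b hb => hF a ha b ⟨hb.1, hb.2.trans (mul_le_mul_of_nonneg_right h ha)⟩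

lemma FlatSector.smul (hN : ∀ (a : ℝ) x, N (a • x) = |a| * N x) (hσ : |σ| = 1)
    (hF : FlatSector N ε u v) : FlatSector N ε (σ • u) (σ • v) := fun a ha b hb => by
  rw [smul_comm a σ u, smul_comm b σ v, ← smul_add, hN, hσ, one_mul, hF a ha b hb]

lemma flatSector_of_forall (hN : ∀ (a : ℝ) x, N (a • x) = |a| * N x)
    (h : ∀ r ∈ Icc 0 ε, N (u + r • v) = 1) : FlatSector N ε u v := by
  intro a ha b hb
  rcases ha.eq_or_lt with rfl | ha
  · obtain rfl : b = 0 := le_antisymm (by simpa using hb.2) hb.1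
    simpa using hN 0 0
  · have hab : a • u + b • v = a • (u + (b / a) • v) := by
      rw [smul_add, smul_smul, mul_div_cancel₀ _ ha.ne']
    rw [hab, hN, h _ ⟨div_nonneg hb.1 ha.le, (div_le_iff₀ ha).2 hb.2⟩, abs_of_pos ha, mul_one]

lemma exists_abs_eq_one_add_smul_mem_segment {a b p : E} (hp : p ∈ segment ℝ a b) :
    ∃ σ : ℝ, |σ| = 1 ∧ ∀ s ∈ Icc (0 : ℝ) (1 / 2), p + (s * σ) • (b - a) ∈ segment ℝ a b := by
  rw [segment_eq_image'] at hp ⊢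
  obtain ⟨θ, ⟨hθ0, hθ1⟩, rfl⟩ := hp
  rcases le_total θ (1 / 2) with hθ | hθ
  · exact ⟨1, abs_one, fun s hs =>
      ⟨θ + s, ⟨by linarith [hs.1], by linarith [hs.2]⟩, by module⟩⟩
  · exact ⟨-1, by simp, fun s hs =>
      ⟨θ - s, ⟨by linarith [hs.2], by linarith [hs.1]⟩, by module⟩⟩

lemma exists_flatSector_of_segment (hN : ∀ (a : ℝ) x, N (a • x) = |a| * N x) {a b p d : E}
    {c : ℝ} (hab : a ≠ b) (hsph : segment ℝ a b ⊆ {x | N x = 1}) (hp : p ∈ segment ℝ a b)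
    (hd : b - a = c • d) : ∃ ε > 0, ∃ σ : ℝ, |σ| = 1 ∧ FlatSector N ε p (σ • d) := by
  have hc : 0 < |c| := abs_pos.2 fun hc => hab (sub_eq_zero.1 (by simp [hd, hc])).symm
  obtain ⟨σ, hσ, hseg⟩ := exists_abs_eq_one_add_smul_mem_segment hp
  refine ⟨|c| / 2, by positivity, σ * c / |c|, ?_, flatSector_of_forall hN fun r hr => hsph ?_⟩
  · rw [abs_div, abs_mul, hσ, one_mul, abs_abs, div_self hc.ne']
  · convert hseg (r / |c|) ⟨div_nonneg hr.1 hc.le, by rw [div_le_iff₀ hc]; linarith [hr.2]⟩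
      using 2
    rw [hd, smul_smul, smul_smul]
    congr 1
    ring

lemma exists_flatSectors (hN : ∀ (a : ℝ) x, N (a • x) = |a| * N x) {x₁ x₂ a₁ b₁ a₂ b₂ : E}
    (hab₁ : a₁ ≠ b₁) (hab₂ : a₂ ≠ b₂)
    (hI₁sphere : segment ℝ a₁ b₁ ⊆ {x | N x = 1}) (hI₂sphere : segment ℝ a₂ b₂ ⊆ {x | N x = 1})
    (hI₁par : ∃ c : ℝ, b₁ - a₁ = c • x₁) (hI₂par : ∃ c : ℝ, b₂ - a₂ = c • x₂)
    (hline₁ : ∃ t : ℝ, t • x₁ ∈ segment ℝ a₂ b₂) (hline₂ : ∃ t : ℝ, t • x₂ ∈ segment ℝ a₁ b₁) :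
    ∃ (u v : E) (σ ε : ℝ), 0 < ε ∧ |σ| = 1 ∧ FlatSector N ε u v ∧ FlatSector N ε v (σ • u) := by
  obtain ⟨t₁, ht₁⟩ := hline₁
  obtain ⟨t₂, ht₂⟩ := hline₂
  obtain ⟨c₁, hc₁⟩ := hI₁par
  obtain ⟨c₂, hc₂⟩ := hI₂par
  have hN0 : N 0 = 0 := by simpa using hN 0 0
  have ht₁0 : t₁ ≠ 0 := by rintro rfl; simpa [hN0] using hI₂sphere ht₁
  have ht₂0 : t₂ ≠ 0 := by rintro rfl; simpa [hN0] using hI₁sphere ht₂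
  obtain ⟨ε₂, hε₂, σ₂, hσ₂, hF₂⟩ := exists_flatSector_of_segment hN hab₂ hI₂sphere ht₁
    (d := t₂ • x₂) (c := c₂ / t₂) (by rw [hc₂, smul_smul, div_mul_cancel₀ _ ht₂0])
  obtain ⟨ε₁, hε₁, σ₁, hσ₁, hF₁⟩ := exists_flatSector_of_segment hN hab₁ hI₁sphere ht₂
    (d := t₁ • x₁) (c := c₁ / t₁) (by rw [hc₁, smul_smul, div_mul_cancel₀ _ ht₁0])
  refine ⟨t₁ • x₁, σ₂ • t₂ • x₂, σ₂ * σ₁, min ε₁ ε₂, lt_min hε₁ hε₂,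
    by rw [abs_mul, hσ₁, hσ₂, one_mul], hF₂.mono (min_le_right _ _), ?_⟩
  rw [mul_smul]
  exact (hF₁.smul hN hσ₂).mono (min_le_left _ _)

end Sector

section Chain

variable {E : Type*} [AddCommGroup E] [Module ℝ E] {ε q σ : ℝ} {u v : E} {j k : ℕ}
  {p : ℕ → ℝ × ℝ}

def planeMap (u v : E) (p : ℝ × ℝ) : E := p.1 • u + p.2 • v

def HStep (ε q : ℝ) (i : ℕ) (p p' : ℝ × ℝ) : Prop :=
  p'.1 = p.1 + q ^ i ∧ p.2 ≤ p'.2 ∧ p'.2 ≤ p.2 + ε * q ^ i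

def IsHChain (ε q : ℝ) (p : ℕ → ℝ × ℝ) : Prop :=
  ∀ i, HStep ε q i (p i) (p (i + 1))

def HasMonoHChain (ε q : ℝ) (χ : ℝ × ℝ → Fin 2) : Prop :=
  ∃ p c, IsHChain ε q p ∧ ∀ i, χ (p i) = c

/-- The H-chains of `χ ∘ twist σ` are the chains of `χ` that advance `q ^ i` vertically. -/
def twist (σ : ℝ) (p : ℝ × ℝ) : ℝ × ℝ := (σ * p.2, p.1)

lemma planeMap_comp_twist : planeMap u v ∘ twist σ = planeMap v (σ • u) := by
  ext p
  simp only [Function.comp_apply, planeMap, twist]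
  module

lemma IsHChain.sub_mem (hp : IsHChain ε q p) (hjk : j ≤ k) :
    (p k).1 - (p j).1 = ∑ i ∈ Finset.Ico j k, q ^ i ∧
      (p k).2 - (p j).2 ∈ Icc 0 (ε * ∑ i ∈ Finset.Ico j k, q ^ i) := by
  induction k, hjk using Nat.le_induction with
  | base => simp
  | succ k hjk ih =>
    obtain ⟨h₁, h₂, h₃⟩ := hp k
    rw [Finset.sum_Ico_succ_top hjk, mul_add]
    exact ⟨by linarith [ih.1], by linarith [ih.2.1], by linarith [ih.2.2]⟩

lemma geomProg_eq_range {q : ℝ} (hq1 : q < 1) :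
    geomProg q = range fun n => ∑ i ∈ Finset.range n, q ^ i := by
  have hsum : ∀ n, ∑ i ∈ Finset.range n, q ^ i = (1 - q ^ n) / (1 - q) := fun n => by
    rw [geom_sum_eq hq1.ne, ← neg_div_neg_eq, neg_sub, neg_sub]
  ext x
  simp only [mem_range, hsum]
  constructor
  · rintro (rfl | ⟨i, -, rfl⟩)
    · exact ⟨0, by simp⟩
    · exact ⟨i, rfl⟩
  · rintro ⟨i, rfl⟩
    rcases i.eq_zero_or_pos with rfl | hi
    · exact Or.inl (by simp)
    · exact Or.inr ⟨i, hi, rfl⟩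

lemma isometricCopyOfReals_range {ι : Type*} [Nonempty ι] {N : (Fin 2 → ℝ) → ℝ} (hN0 : N 0 = 0)
    {S : ι → ℝ} (hS : Function.Injective S) {f : ι → Fin 2 → ℝ}
    (hf : ∀ i j, N (f i - f j) = |S i - S j|) :
    IsometricCopyOfReals N (range S) (range f) := by
  have hF : ∀ i, (f ∘ Function.invFun S) (S i) = f i := fun i => by
    simp [Function.leftInverse_invFun hS i]
  refine ⟨f ∘ Function.invFun S, ⟨?_, ?_, ?_⟩, ?_⟩
  · rintro _ ⟨i, rfl⟩
    exact ⟨i, (hF i).symm⟩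
  · rintro _ ⟨i, rfl⟩ _ ⟨j, rfl⟩ h
    have hij := hf i j
    rw [← hF i, ← hF j, h, sub_self, hN0] at hij
    exact sub_eq_zero.1 (abs_eq_zero.1 hij.symm)
  · rintro _ ⟨i, rfl⟩
    exact ⟨S i, ⟨i, rfl⟩, hF i⟩
  · rintro _ ⟨i, rfl⟩ _ ⟨j, rfl⟩
    rw [hF, hF]
    exact hf i j

lemma isometricCopyOfReals_of_isHChain {N : (Fin 2 → ℝ) → ℝ} {u v : Fin 2 → ℝ}
    (hN : ∀ (a : ℝ) x, N (a • x) = |a| * N x) (hq : 0 < q) (hq1 : q < 1)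
    (hF : FlatSector N ε u v) (hp : IsHChain ε q p) :
    IsometricCopyOfReals N (geomProg q) (range (planeMap u v ∘ p)) := by
  set S : ℕ → ℝ := fun n => ∑ i ∈ Finset.range n, q ^ i
  have hS : StrictMono S := strictMono_nat_of_lt_succ fun n => by
    simp [S, Finset.sum_range_succ, pow_pos hq n]
  have hdist : ∀ j k, j ≤ k → N (planeMap u v (p k) - planeMap u v (p j)) = S k - S j := by
    intro j k hjk
    obtain ⟨hx, hy⟩ := hp.sub_mem hjk
    have hsub : planeMap u v (p k) - planeMap u v (p j) =
        ((p k).1 - (p j).1) • u + ((p k).2 - (p j).2) • v := by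
      simp only [planeMap]
      module
    rw [hsub, ← Finset.sum_Ico_eq_sub _ hjk, ← hx]
    exact hF _ (hx ▸ Finset.sum_nonneg fun i _ => (pow_pos hq i).le) _ (hx ▸ hy)
  rw [geomProg_eq_range hq1]
  refine isometricCopyOfReals_range (by simpa using hN 0 0) hS.injective fun i j => ?_
  rcases le_total j i with h | h
  · rw [Function.comp_apply, Function.comp_apply, hdist j i h,
      abs_of_nonneg (sub_nonneg.2 (hS.monotone h))]
  · rw [Function.comp_apply, Function.comp_apply, ← neg_sub, abs_sub_comm,
      abs_of_nonneg (sub_nonneg.2 (hS.monotone h)), ← hdist i j h, ← neg_one_smul ℝ,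
      hN, abs_neg, abs_one, one_mul]

lemma exists_monochromatic_copy {N : (Fin 2 → ℝ) → ℝ} {u v : Fin 2 → ℝ}
    (hN : ∀ (a : ℝ) x, N (a • x) = |a| * N x) (hq : 0 < q) (hq1 : q < 1)
    (hF : FlatSector N ε u v) {c : (Fin 2 → ℝ) → Fin 2}
    (h : HasMonoHChain ε q (c ∘ planeMap u v)) :
    ∃ M', IsometricCopyOfReals N (geomProg q) M' ∧ ∀ z ∈ M', ∀ w ∈ M', c z = c w := by
  obtain ⟨p, c₀, hp, hc⟩ := h
  refine ⟨_, isometricCopyOfReals_of_isHChain hN hq hq1 hF hp, ?_⟩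
  rintro _ ⟨i, rfl⟩ _ ⟨j, rfl⟩
  exact (hc i).trans (hc j).symm

end Chain

section Rectangle

variable {ε q σ w h w' h' ℓ : ℝ} {j : ℕ} {χ : ℝ × ℝ → Fin 2}

def IsMonoRect (χ : ℝ × ℝ → Fin 2) (w h : ℝ) : Prop :=
  ∃ c A B, ∀ x ∈ Icc A (A + w), ∀ y ∈ Icc B (B + h), χ (x, y) = c

lemma fin_two_eq_one_sub_of_ne : ∀ {a c : Fin 2}, a ≠ c → a = 1 - c := by decide

lemma IsMonoRect.mono (hR : IsMonoRect χ w h) (hw : w' ≤ w) (hh : h' ≤ h) :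
    IsMonoRect χ w' h' := by
  obtain ⟨c, A, B, hR⟩ := hR
  exact ⟨c, A, B, fun x hx y hy =>
    hR x (Icc_subset_Icc_right (by linarith) hx) y (Icc_subset_Icc_right (by linarith) hy)⟩

lemma exists_Icc_mul_mem (hσ : |σ| = 1) (A h : ℝ) :
    ∃ A', ∀ x ∈ Icc A' (A' + h), σ * x ∈ Icc A (A + h) := by
  rcases (abs_eq zero_le_one).1 hσ with rfl | rfl
  · exact ⟨A, fun x hx => by simpa using hx⟩
  · exact ⟨-(A + h), fun x hx => ⟨by linarith [hx.2], by linarith [hx.1]⟩⟩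

lemma isMonoRect_comp_twist (hσ : |σ| = 1) :
    IsMonoRect (χ ∘ twist σ) w h ↔ IsMonoRect χ h w := by
  have hσσ : σ * σ = 1 := by rw [← abs_mul_abs_self, hσ, one_mul]
  constructor
  · rintro ⟨c, A, B, hR⟩
    obtain ⟨A', hA'⟩ := exists_Icc_mul_mem hσ B h
    refine ⟨c, A', A, fun x hx y hy => ?_⟩
    simpa [twist, ← mul_assoc, hσσ] using hR y hy (σ * x) (hA' x hx)
  · rintro ⟨c, A, B, hR⟩
    obtain ⟨B', hB'⟩ := exists_Icc_mul_mem hσ A h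
    exact ⟨c, B, B', fun x hx y hy => hR _ (hB' y hy) x hx⟩

lemma hasMonoHChain_of_isMonoRect (hq : 0 ≤ q) (hq1 : q < 1) (hε : 0 ≤ ε)
    (hR : IsMonoRect χ (1 / (1 - q)) 0) : HasMonoHChain ε q χ := by
  obtain ⟨c, A, B, hR⟩ := hR
  refine ⟨fun k => (A + ∑ i ∈ Finset.range k, q ^ i, B), c, fun k => ?_, fun k => ?_⟩
  · exact ⟨by simp [Finset.sum_range_succ, add_assoc], le_rfl,
      le_add_of_nonneg_right (mul_nonneg hε (pow_nonneg hq k))⟩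
  · have hle := geom_sum_Ico_le_of_lt_one (m := 0) (n := k) hq hq1
    rw [← Finset.range_eq_Ico, pow_zero] at hle
    exact hR _ ⟨le_add_of_nonneg_right (Finset.sum_nonneg fun i _ => pow_nonneg hq i),
      by linarith⟩ _ ⟨le_rfl, by simp⟩

lemma exists_eq_of_not_isMonoRect (hR : ¬IsMonoRect χ 0 ℓ) (c : Fin 2) (x B : ℝ) :
    ∃ y ∈ Icc B (B + ℓ), χ (x, y) = c := by
  by_contra! h
  refine hR ⟨1 - c, x, B, fun x' hx' y hy => ?_⟩
  rw [add_zero, Icc_self, mem_singleton_iff] at hx'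
  exact fin_two_eq_one_sub_of_ne (hx' ▸ h y hy)

lemma exists_hStep_succ {i : ℕ} (hR : ¬IsMonoRect χ 0 (ε * q ^ i)) (p : ℝ × ℝ) :
    ∃ p', HStep ε q i p p' ∧ χ p' = χ p := by
  obtain ⟨y, hy, hχ⟩ := exists_eq_of_not_isMonoRect hR (χ p) (p.1 + q ^ i) p.2
  exact ⟨(p.1 + q ^ i, y), ⟨rfl, hy.1, hy.2⟩, hχ⟩

lemma exists_hStep_pred {i : ℕ} (hR : ¬IsMonoRect χ 0 (ε * q ^ i)) (p : ℝ × ℝ) :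
    ∃ p', HStep ε q i p' p ∧ χ p' = χ p := by
  obtain ⟨y, hy, hχ⟩ :=
    exists_eq_of_not_isMonoRect hR (χ p) (p.1 - q ^ i) (p.2 - ε * q ^ i)
  exact ⟨(p.1 - q ^ i, y), ⟨by simp, by linarith [hy.2], by linarith [hy.1]⟩, hχ⟩

lemma exists_hChain_ending_at (hwin : ∀ i < j, ¬IsMonoRect χ 0 (ε * q ^ i)) (p : ℝ × ℝ) :
    ∃ r : ℕ → ℝ × ℝ, r j = p ∧ (∀ i < j, HStep ε q i (r i) (r (i + 1))) ∧
      ∀ i ≤ j, χ (r i) = χ p := by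
  induction j generalizing p with
  | zero => exact ⟨fun _ => p, rfl, by simp, fun _ _ => rfl⟩
  | succ j ih =>
    obtain ⟨p', hstep, hp'⟩ := exists_hStep_pred (hwin j j.lt_succ_self) p
    obtain ⟨r, hrj, hr, hχ⟩ := ih (fun i hi => hwin i (by omega)) p'
    refine ⟨Function.update r (j + 1) p, by simp, fun i hi => ?_, fun i hi => ?_⟩
    · rcases (by omega : i < j ∨ i = j) with hi | rfl
      · rw [Function.update_of_ne (by omega), Function.update_of_ne (by omega)]
        exact hr i hi
      · rw [Function.update_self, Function.update_of_ne (by omega), hrj]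
        exact hstep
    · rcases (by omega : i ≤ j ∨ i = j + 1) with hi | rfl
      · rw [Function.update_of_ne (by omega), hχ i hi, hp']
      · rw [Function.update_self]

lemma isHChain_splice (hε : 0 ≤ ε) (hq : 0 ≤ q) {r : ℕ → ℝ × ℝ}
    (hr : ∀ i < j, HStep ε q i (r i) (r (i + 1))) {y : ℝ}
    (hy : y ∈ Icc (r j).2 ((r j).2 + ε * q ^ j)) :
    IsHChain ε q fun k => if k ≤ j then r k else ((r j).1 + ∑ i ∈ Finset.Ico j k, q ^ i, y) := by
  intro k
  rcases lt_trichotomy k j with hk | rfl | hk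
  · simp only [if_pos hk.le, if_pos (show k + 1 ≤ j by omega)]
    exact hr k hk
  · simp only [le_refl, if_true, if_neg (show ¬k + 1 ≤ k by omega),
      Finset.sum_Ico_succ_top le_rfl, Finset.Ico_self, Finset.sum_empty, zero_add]
    exact ⟨rfl, hy.1, hy.2⟩
  · simp only [if_neg (show ¬k ≤ j by omega), if_neg (show ¬k + 1 ≤ j by omega),
      Finset.sum_Ico_succ_top hk.le]
    exact ⟨by ring, le_rfl, le_add_of_nonneg_right (mul_nonneg hε (pow_nonneg hq k))⟩

lemma IsMonoRect.taller (hq : 0 ≤ q) (hq1 : q < 1) (hε : 0 ≤ ε)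
    (hχ : ¬HasMonoHChain ε q χ) (hwin : ∀ i < j, ¬IsMonoRect χ 0 (ε * q ^ i))
    (hR : IsMonoRect χ w h) (hh : 0 ≤ h) :
    IsMonoRect χ (w - q ^ (j + 1) / (1 - q)) (h + ε * q ^ j) := by
  obtain ⟨c, A, B, hR⟩ := hR
  refine ⟨1 - c, A - q ^ j, B - ε * q ^ j, fun x hx y hy =>
    fin_two_eq_one_sub_of_ne fun hxy => hχ ?_⟩
  have hℓ : 0 ≤ ε * q ^ j := mul_nonneg hε (pow_nonneg hq j)
  obtain ⟨r, hrj, hr, hχr⟩ := exists_hChain_ending_at hwin (x, y)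
  refine ⟨_, c, isHChain_splice hε hq hr (y := max y B) ?_, fun k => ?_⟩
  · rw [hrj]
    exact ⟨le_max_left _ _, max_le (by linarith) (by linarith [hy.1])⟩
  by_cases hk : k ≤ j
  · simp only [if_pos hk]
    rw [hχr k hk, hxy]
  simp only [if_neg hk, hrj]
  have hhead : q ^ j ≤ ∑ i ∈ Finset.Ico j k, q ^ i :=
    Finset.single_le_sum (f := fun i => q ^ i) (fun i _ => pow_nonneg hq i)
      (Finset.mem_Ico.2 ⟨le_rfl, by omega⟩)
  have htail := geom_sum_Ico_le_of_lt_one (m := j) (n := k) hq hq1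
  have hsplit : q ^ j / (1 - q) = q ^ j + q ^ (j + 1) / (1 - q) := by
    field_simp [(sub_pos.2 hq1).ne']
    ring
  exact hR _ ⟨by linarith [hx.1], by linarith [hx.2]⟩ _
    ⟨le_max_right _ _, max_le (by linarith [hy.2]) (by linarith)⟩

lemma IsMonoRect.wider (hσ : |σ| = 1) (hq : 0 ≤ q) (hq1 : q < 1) (hε : 0 ≤ ε)
    (hχ : ¬HasMonoHChain ε q (χ ∘ twist σ)) (hwin : ∀ i < j, ¬IsMonoRect χ (ε * q ^ i) 0)
    (hR : IsMonoRect χ w h) (hw : 0 ≤ w) :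
    IsMonoRect χ (w + ε * q ^ j) (h - q ^ (j + 1) / (1 - q)) := by
  rw [← isMonoRect_comp_twist hσ] at hR ⊢
  exact hR.taller hq hq1 hε hχ (fun i hi => (isMonoRect_comp_twist hσ).not.2 (hwin i hi)) hw

lemma not_isMonoRect_segment (hσ : |σ| = 1) (hq : 0 < q) (hq1 : q < 1)
    (hqε : q < ε * (1 - q)) (hH : ¬HasMonoHChain ε q χ)
    (hV : ¬HasMonoHChain ε q (χ ∘ twist σ)) (j : ℕ) :
    ¬IsMonoRect χ 0 (ε * q ^ j) ∧ ¬IsMonoRect χ (ε * q ^ j) 0 := by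
  induction j using Nat.strong_induction_on with
  | _ j ih =>
  have hε : 0 ≤ ε := by nlinarith
  set ℓ := ε * q ^ j
  set τ := q ^ (j + 1) / (1 - q)
  have hτℓ : τ < ℓ := by
    rw [div_lt_iff₀ (by linarith), pow_succ]
    nlinarith [pow_pos hq j]
  have taller {w h : ℝ} (hR : IsMonoRect χ w h) (hh : 0 ≤ h) : IsMonoRect χ (w - τ) (h + ℓ) :=
    hR.taller hq.le hq1 hε hH (fun i hi => (ih i hi).1) hh
  have wider {w h : ℝ} (hR : IsMonoRect χ w h) (hw : 0 ≤ w) : IsMonoRect χ (w + ℓ) (h - τ) :=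
    hR.wider hσ hq.le hq1 hε hV (fun i hi => (ih i hi).2) hw
  have grow (hR : IsMonoRect χ 0 ℓ) (n : ℕ) : IsMonoRect χ (n * (ℓ - τ)) (ℓ + n * (ℓ - τ)) := by
    induction n with
    | zero => simpa using hR
    | succ n ihn =>
      refine (taller (wider ihn (by positivity)) (by nlinarith)).mono ?_ ?_ <;> push_cast <;>
        linarith
  have hvert : ¬IsMonoRect χ 0 ℓ := fun hR => by
    obtain ⟨n, hn⟩ := exists_nat_ge (1 / (1 - q) / (ℓ - τ))
    rw [div_le_iff₀ (by linarith)] at hn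
    exact hH (hasMonoHChain_of_isMonoRect hq.le hq1 hε
      ((grow hR n).mono hn (by positivity)))
  exact ⟨hvert, fun hR => hvert ((taller hR le_rfl).mono (by linarith) (by simp))⟩

lemma hasMonoHChain_of_forall_not_isMonoRect (h : ∀ i, ¬IsMonoRect χ 0 (ε * q ^ i)) :
    HasMonoHChain ε q χ := by
  choose next hnext hχ using fun i => exists_hStep_succ (h i)
  let p : ℕ → ℝ × ℝ := fun n => Nat.rec 0 next n
  refine ⟨p, χ 0, fun i => hnext i (p i), fun i => ?_⟩
  induction i with
  | zero => rfl
  | succ i ih => exact (hχ i (p i)).trans ih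

theorem hasMonoHChain_or_comp_twist (hσ : |σ| = 1) (hq : 0 < q) (hq1 : q < 1)
    (hqε : q < ε * (1 - q)) (χ : ℝ × ℝ → Fin 2) :
    HasMonoHChain ε q χ ∨ HasMonoHChain ε q (χ ∘ twist σ) := by
  by_contra! h
  exact h.1 (hasMonoHChain_of_forall_not_isMonoRect fun i =>
    (not_isMonoRect_segment hσ hq hq1 hqε h.1 h.2 i).1)

end Rectangle


theorem mixed_norm_monochromatic_geomProg_general (N : (Fin 2 → ℝ) → ℝ) (hN : IsNorm2 N)
    (x₁ x₂ : Fin 2 → ℝ)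
    (a₁ b₁ a₂ b₂ : Fin 2 → ℝ) (hab₁ : a₁ ≠ b₁) (hab₂ : a₂ ≠ b₂)
    (hI₁sphere : segment ℝ a₁ b₁ ⊆ {x : Fin 2 → ℝ | N x = 1})
    (hI₂sphere : segment ℝ a₂ b₂ ⊆ {x : Fin 2 → ℝ | N x = 1})
    (hI₁par : ∃ c : ℝ, b₁ - a₁ = c • x₁)
    (hI₂par : ∃ c : ℝ, b₂ - a₂ = c • x₂)
    (hline₁ : ∃ t : ℝ, t • x₁ ∈ segment ℝ a₂ b₂)
    (hline₂ : ∃ t : ℝ, t • x₂ ∈ segment ℝ a₁ b₁) :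
    ∃ q₀ : ℝ, 0 < q₀ ∧ ∀ q : ℝ, 0 < q → q < q₀ →
      ∀ c : (Fin 2 → ℝ) → Fin 2,
        ∃ M' : Set (Fin 2 → ℝ), IsometricCopyOfReals N (geomProg q) M' ∧
          ∀ z ∈ M', ∀ w ∈ M', c z = c w := by
  obtain ⟨u, v, σ, ε, hε, hσ, huv, hvu⟩ := exists_flatSectors hN.2.1 hab₁ hab₂
    hI₁sphere hI₂sphere hI₁par hI₂par hline₁ hline₂
  refine ⟨ε / (1 + ε), by positivity, fun q hq hq₀ c => ?_⟩
  have hq1 : q < 1 := hq₀.trans ((div_lt_one (by positivity)).2 (by linarith))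
  have hqε : q < ε * (1 - q) := by
    rw [lt_div_iff₀ (by positivity)] at hq₀
    linarith
  rcases hasMonoHChain_or_comp_twist hσ hq hq1 hqε (c ∘ planeMap u v) with h | h
  · exact exists_monochromatic_copy hN.2.1 hq hq1 huv h
  · rw [Function.comp_assoc, planeMap_comp_twist] at h
    exact exists_monochromatic_copy hN.2.1 hq hq1 hvu h

/-- Mixed norms: suppose the unit sphere of `N` contains nondegenerate segments `I₁ ∥ x¹`
and `I₂ ∥ x²`, the line through the origin in direction `x¹` meets `I₂`, and the line
through the origin in direction `x²` meets `I₁`. Then there is `q₀ > 0` such that for all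
`0 < q < q₀`, every two-colouring of the plane contains a monochromatic `N`-isometric
copy of G(q). -/
theorem mixed_norm_monochromatic_geomProg (N : (Fin 2 → ℝ) → ℝ) (hN : IsNorm2 N)
    (x₁ x₂ : Fin 2 → ℝ) (hx₁ : x₁ ≠ 0) (hx₂ : x₂ ≠ 0)
    (a₁ b₁ a₂ b₂ : Fin 2 → ℝ) (hab₁ : a₁ ≠ b₁) (hab₂ : a₂ ≠ b₂)
    (hI₁sphere : segment ℝ a₁ b₁ ⊆ {x : Fin 2 → ℝ | N x = 1})
    (hI₂sphere : segment ℝ a₂ b₂ ⊆ {x : Fin 2 → ℝ | N x = 1})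
    (hI₁par : ∃ c : ℝ, b₁ - a₁ = c • x₁)
    (hI₂par : ∃ c : ℝ, b₂ - a₂ = c • x₂)
    (hline₁ : ∃ t : ℝ, t • x₁ ∈ segment ℝ a₂ b₂)
    (hline₂ : ∃ t : ℝ, t • x₂ ∈ segment ℝ a₁ b₁) :
    ∃ q₀ : ℝ, 0 < q₀ ∧ ∀ q : ℝ, 0 < q → q < q₀ →
      ∀ c : (Fin 2 → ℝ) → Fin 2,
        ∃ M' : Set (Fin 2 → ℝ), IsometricCopyOfReals N (geomProg q) M' ∧
          ∀ z ∈ M', ∀ w ∈ M', c z = c w :=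
  mixed_norm_monochromatic_geomProg_general N hN x₁ x₂ a₁ b₁ a₂ b₂ hab₁ hab₂ hI₁sphere hI₂sphere
    hI₁par hI₂par hline₁ hline₂
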